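/- arXiv:2603.13207 — 2 statements merged into one kernel-verified Lean document; each statement's English description precedes it below -/
import Mathlib

section
/- The trigamma function has the integral representation ψ'(z) = ∫_0^∞ t e^{-tz}/(1 - e^{-t}) dt for all real z > 0. -/
/-!
By Bohr–Mollerup, `log Γ x` is the limit of
`logGammaSeq x n = x log n + log n! - ∑_{m ≤ n} log (x + m)`. The first and second
`x`-derivatives of these functions converge locally uniformly on `(0, ∞)`
(after subtracting `log n - harmonic n → -γ`, they are partial sums of series dominated on bounded
intervals by `∑ (m + 1)⁻²`), so `log Γ` can be differentiated termwise twice: `ψ' x = ∑ₘ (x + m)⁻²`.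
On the other side, expanding `1 / (1 - e⁻ᵗ)` as a geometric series and integrating termwise turns
the integral into `∑ₙ ∫ t e^{-(z + n) t} dt = ∑ₙ (z + n)⁻²`.
-/

open MeasureTheory Real

/-- The trigamma function: second derivative of `log ∘ Γ`. -/
noncomputable def trigamma (z : ℝ) : ℝ :=
  iteratedDeriv 2 (fun x => Real.log (Real.Gamma x)) z

open Filter Topology Set

lemma summable_inv_add_nat_sq (a : ℝ) : Summable fun m : ℕ => ((a + m) ^ 2)⁻¹ :=
  ((summable_one_div_nat_add_rpow a 2).mpr one_lt_two).congr fun m => by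
    rw [one_div, rpow_two, sq_abs, add_comm]

lemma tendstoLocallyUniformlyOn_Ioi_of_forall_Ioo {ι β : Type*} [UniformSpace β]
    {F : ι → ℝ → β} {f : ℝ → β} {l : Filter ι} {c : ℝ}
    (h : ∀ a b, c < a → TendstoUniformlyOn F f l (Ioo a b)) :
    TendstoLocallyUniformlyOn F f l (Ioi c) :=
  tendstoLocallyUniformlyOn_of_forall_exists_nhds fun x (hx : c < x) =>
    ⟨Ioo ((c + x) / 2) (x + 1),
      nhdsWithin_le_nhds (Ioo_mem_nhds (by linarith) (by linarith)), h _ _ (by linarith)⟩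

noncomputable def digammaSeq (n : ℕ) (x : ℝ) : ℝ := log n - ∑ m ∈ Finset.range (n + 1), (x + m)⁻¹

noncomputable def digammaSeries (x : ℝ) : ℝ :=
  -eulerMascheroniConstant - x⁻¹ + ∑' m : ℕ, (((m : ℝ) + 1)⁻¹ - (x + m + 1)⁻¹)

noncomputable def trigammaSeries (x : ℝ) : ℝ := ∑' m : ℕ, ((x + m) ^ 2)⁻¹

lemma hasDerivAt_logGammaSeq {x : ℝ} (hx : 0 < x) (n : ℕ) :
    HasDerivAt (BohrMollerup.logGammaSeq · n) (digammaSeq n x) x := by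
  have hlog : ∀ m ∈ Finset.range (n + 1), HasDerivAt (fun y => log (y + m)) (x + m)⁻¹ x :=
    fun m _ => by simpa using ((hasDerivAt_id x).add_const (m : ℝ)).log (by positivity)
  exact ((((hasDerivAt_id x).mul_const (log n)).add_const (log n.factorial)).fun_sub
    (.fun_sum hlog)).congr_deriv (by rw [one_mul, digammaSeq])

lemma hasDerivAt_digammaSeq {x : ℝ} (hx : 0 < x) (n : ℕ) :
    HasDerivAt (digammaSeq n) (∑ m ∈ Finset.range (n + 1), ((x + m) ^ 2)⁻¹) x := by
  have hinv : ∀ m ∈ Finset.range (n + 1),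
      HasDerivAt (fun y : ℝ => (y + m)⁻¹) (-((x + m) ^ 2)⁻¹) x :=
    fun m _ => by
      simpa [neg_div] using ((hasDerivAt_id x).add_const (m : ℝ)).fun_inv (by positivity)
  exact ((HasDerivAt.fun_sum hinv).const_sub (log n)).congr_deriv
    (by rw [Finset.sum_neg_distrib, neg_neg])

lemma digammaSeq_eq (n : ℕ) (x : ℝ) : digammaSeq n x =
    (log n - harmonic n) - x⁻¹ + ∑ m ∈ Finset.range n, (((m : ℝ) + 1)⁻¹ - (x + m + 1)⁻¹) := by
  rw [digammaSeq, Finset.sum_range_succ', harmonic, Finset.sum_sub_distrib]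
  push_cast
  simp only [add_assoc, add_zero]
  ring

lemma tendstoUniformlyOn_digammaSeq (b : ℝ) :
    TendstoUniformlyOn digammaSeq digammaSeries atTop (Ioo 0 b) := by
  have hconst : Tendsto (fun n : ℕ => log n - harmonic n) atTop
      (𝓝 (-eulerMascheroniConstant)) := by
    simpa using tendsto_harmonic_sub_log.neg
  have hpole : TendstoUniformlyOn (fun (_ : ℕ) (x : ℝ) => x⁻¹) (·⁻¹) atTop (Ioo 0 b) :=
    fun _ hu => Eventually.of_forall fun _ _ _ => refl_mem_uniformity hu
  have hterm : ∀ (m : ℕ) (x : ℝ), x ∈ Ioo 0 b →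
      ‖((m : ℝ) + 1)⁻¹ - (x + m + 1)⁻¹‖ ≤ b * ((1 + m : ℝ) ^ 2)⁻¹ := by
    rintro m x ⟨hx0, hxb⟩
    have hdiff : ((m : ℝ) + 1)⁻¹ - (x + m + 1)⁻¹ = x / ((m + 1) * (x + m + 1)) := by
      field_simp
      ring
    rw [hdiff, norm_of_nonneg (by positivity), ← div_eq_mul_inv, sq, add_comm 1]
    gcongr <;> linarith
  have hseries := tendstoUniformlyOn_tsum_nat ((summable_inv_add_nat_sq 1).mul_left b) hterm
  refine (((hconst.tendstoUniformlyOn_const _).sub hpole).add hseries).congr ?_ |>.congr_right ?_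
  · exact Eventually.of_forall fun n x _ => (digammaSeq_eq n x).symm
  · exact fun x _ => rfl

lemma hasDerivAt_log_Gamma {x : ℝ} (hx : 0 < x) :
    HasDerivAt (fun x => log (Gamma x)) (digammaSeries x) x :=
  hasDerivAt_of_tendstoLocallyUniformlyOn isOpen_Ioi
    (tendstoLocallyUniformlyOn_Ioi_of_forall_Ioo fun _ b _ =>
      (tendstoUniformlyOn_digammaSeq b).mono (Ioo_subset_Ioo_left (by linarith)))
    (Eventually.of_forall fun n _ hy => hasDerivAt_logGammaSeq hy n)
    (fun _ hy => BohrMollerup.tendsto_log_gamma hy) hx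

lemma tendstoUniformlyOn_sum_inv_add_nat_sq {a : ℝ} (ha : 0 < a) (b : ℝ) :
    TendstoUniformlyOn (fun (n : ℕ) (x : ℝ) => ∑ m ∈ Finset.range (n + 1), ((x + m) ^ 2)⁻¹)
      trigammaSeries atTop (Ioo a b) := by
  have hterm : ∀ (m : ℕ) (x : ℝ), x ∈ Ioo a b → ‖((x + m) ^ 2)⁻¹‖ ≤ ((a + m) ^ 2)⁻¹ := by
    rintro m x ⟨hax, -⟩
    rw [norm_of_nonneg (by positivity)]
    gcongr
  exact (tendstoUniformlyOn_tsum_nat (summable_inv_add_nat_sq a) hterm).seq_tendstoUniformlyOn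
    (· + 1) (tendsto_add_atTop_nat 1)

lemma hasDerivAt_digammaSeries {x : ℝ} (hx : 0 < x) :
    HasDerivAt digammaSeries (trigammaSeries x) x :=
  hasDerivAt_of_tendstoLocallyUniformlyOn isOpen_Ioi
    (tendstoLocallyUniformlyOn_Ioi_of_forall_Ioo fun _ b ha =>
      tendstoUniformlyOn_sum_inv_add_nat_sq ha b)
    (Eventually.of_forall fun n _ hy => hasDerivAt_digammaSeq hy n)
    (fun _ hy => (tendstoUniformlyOn_digammaSeq (_ + 1)).tendsto_at ⟨hy, lt_add_one _⟩) hx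

lemma trigamma_eq_trigammaSeries {x : ℝ} (hx : 0 < x) : trigamma x = trigammaSeries x := by
  have hderiv : deriv (fun x => log (Gamma x)) =ᶠ[𝓝 x] digammaSeries :=
    eventually_of_mem (Ioi_mem_nhds hx) fun y hy => (hasDerivAt_log_Gamma hy).deriv
  rw [trigamma, iteratedDeriv_succ, iteratedDeriv_one, hderiv.deriv_eq,
    (hasDerivAt_digammaSeries hx).deriv]

lemma integral_mul_exp_neg_mul_Ioi {r : ℝ} (hr : 0 < r) :
    ∫ t in Ioi (0 : ℝ), t * exp (-(r * t)) = (r ^ 2)⁻¹ := by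
  simpa [show (2 : ℝ) - 1 = 1 by norm_num] using integral_rpow_mul_exp_neg_mul_Ioi two_pos hr

lemma integrableOn_mul_exp_neg_mul_Ioi {r : ℝ} (hr : 0 < r) :
    IntegrableOn (fun t => t * exp (-(r * t))) (Ioi 0) :=
  .of_integral_ne_zero (by rw [integral_mul_exp_neg_mul_Ioi hr]; positivity)

lemma hasSum_mul_exp_neg_mul_add_nat {t : ℝ} (ht : 0 < t) (z : ℝ) :
    HasSum (fun n : ℕ => t * exp (-((z + n) * t))) (t * exp (-t * z) / (1 - exp (-t))) := by
  have hgeom := hasSum_geometric_of_lt_one (exp_nonneg (-t)) (exp_lt_one_iff.mpr (by linarith))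
  have hterm (n : ℕ) : t * exp (-((z + n) * t)) = t * exp (-t * z) * exp (-t) ^ n := by
    rw [mul_assoc, ← exp_nat_mul, ← exp_add]
    ring_nf
  simpa only [hterm, div_eq_mul_inv] using hgeom.mul_left (t * exp (-t * z))

lemma integral_mul_exp_neg_mul_div_one_sub_exp {z : ℝ} (hz : 0 < z) :
    ∫ t in Ioi (0 : ℝ), t * exp (-t * z) / (1 - exp (-t)) = trigammaSeries z := by
  have hpos (n : ℕ) : 0 < z + n := by positivity
  have hnorm (n : ℕ) : ∫ t in Ioi (0 : ℝ), ‖t * exp (-((z + n) * t))‖ = ((z + n) ^ 2)⁻¹ := by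
    rw [← integral_mul_exp_neg_mul_Ioi (hpos n)]
    exact setIntegral_congr_fun measurableSet_Ioi fun t (ht : 0 < t) =>
      norm_of_nonneg (by positivity)
  calc ∫ t in Ioi (0 : ℝ), t * exp (-t * z) / (1 - exp (-t))
      = ∫ t in Ioi (0 : ℝ), ∑' n : ℕ, t * exp (-((z + n) * t)) :=
        setIntegral_congr_fun measurableSet_Ioi fun t ht =>
          (hasSum_mul_exp_neg_mul_add_nat ht z).tsum_eq.symm
    _ = ∑' n : ℕ, ∫ t in Ioi (0 : ℝ), t * exp (-((z + n) * t)) :=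
        (integral_tsum_of_summable_integral_norm
          (fun n => integrableOn_mul_exp_neg_mul_Ioi (hpos n))
          (by simpa only [hnorm] using summable_inv_add_nat_sq z)).symm
    _ = trigammaSeries z := tsum_congr fun n => integral_mul_exp_neg_mul_Ioi (hpos n)

/-- Integral representation of the trigamma function:
`ψ'(z) = ∫_0^∞ t * exp (-t z) / (1 - exp (-t)) dt` for `z > 0`. -/
theorem trigamma_integral_repr (z : ℝ) (hz : 0 < z) :
    trigamma z = ∫ t in Set.Ioi (0 : ℝ), t * Real.exp (-t * z) / (1 - Real.exp (-t)) := by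
  rw [trigamma_eq_trigammaSeries hz, integral_mul_exp_neg_mul_div_one_sub_exp hz]
end

section
/- Log-concavity bound: for α > 0, a finite set S, weights x : S → ℝ with x(i) > 0, X = Σ_{i∈S} x(i) ≤ 1, Y = 1 - X > 0, the quantity ψ'(α) - Σ_{i∈S} x(i)² ψ'(α x(i)) - Y² ψ'(αY) is ≤ 0. -/
open Real

/-!
Write `ψ` for the digamma function `(log ∘ Γ)'`. From `ψ (z + 1) = ψ z + 1 / z` and the convexity
bounds `log (z - 1) ≤ ψ z ≤ log z` one gets `ψ y - ψ x = ∑ₖ (1 / (x + k) - 1 / (y + k))`, and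
differentiating gives `ψ' z = ∑ₖ 1 / (z + k) ^ 2`. Comparing this series and its derivative with
telescoping sums gives `ψ' z ≤ 1 / z + 1 / z ^ 2 ≤ -z ψ'' z`, so `z ↦ z ψ' z` is antitone on
`(0, ∞)`. Hence `z ↦ z ^ 2 ψ' z` is subadditive there, and the bound is this subadditivity for
`α = ∑ α x i + α Y`, divided by `α ^ 2`.
-/

open Filter Topology Set Finset

noncomputable def digamma : ℝ → ℝ := deriv fun x => log (Gamma x)

theorem differentiableAt_log_Gamma {x : ℝ} (hx : 0 < x) :
    DifferentiableAt ℝ (fun y => log (Gamma y)) x :=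
  (differentiableAt_Gamma fun m => by linarith [(m.cast_nonneg : (0 : ℝ) ≤ m)]).log
    (Gamma_pos_of_pos hx).ne'

theorem digamma_add_one {x : ℝ} (hx : 0 < x) : digamma (x + 1) = digamma x + x⁻¹ := by
  have h : (fun y => log (Gamma (y + 1))) =ᶠ[𝓝 x] fun y => log (Gamma y) + log y := by
    filter_upwards [eventually_gt_nhds hx] with y hy
    rw [Gamma_add_one hy.ne', log_mul hy.ne' (Gamma_pos_of_pos hy).ne', add_comm]
  have := h.deriv_eq
  rwa [deriv_comp_add_const (fun y => log (Gamma y)),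
    deriv_fun_add (differentiableAt_log_Gamma hx) (differentiableAt_log hx.ne'), deriv_log] at this

theorem digamma_add_nat {x : ℝ} (hx : 0 < x) (n : ℕ) :
    digamma (x + n) = digamma x + ∑ k ∈ range n, (x + k)⁻¹ := by
  induction n with
  | zero => simp
  | succ n ih =>
    rw [Nat.cast_succ, ← add_assoc, digamma_add_one (by positivity), ih, sum_range_succ, add_assoc]

theorem log_sub_one_le_digamma {x : ℝ} (hx : 1 < x) : log (x - 1) ≤ digamma x := by
  have hslope := convexOn_log_Gamma.slope_le_deriv (mem_Ioi.2 (sub_pos.2 hx))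
    (mem_Ioi.2 (by linarith)) (sub_one_lt x) (differentiableAt_log_Gamma (by linarith))
  have hrec := Gamma_add_one (sub_pos.2 hx).ne'
  rw [sub_add_cancel] at hrec
  rwa [slope_def_field, sub_sub_cancel, div_one, Function.comp_apply, Function.comp_apply, hrec,
    log_mul (sub_pos.2 hx).ne' (Gamma_pos_of_pos (sub_pos.2 hx)).ne', add_sub_cancel_right] at hslope

theorem digamma_le_log {x : ℝ} (hx : 0 < x) : digamma x ≤ log x := by
  have hslope := convexOn_log_Gamma.deriv_le_slope (mem_Ioi.2 hx)
    (mem_Ioi.2 (by linarith)) (lt_add_one x) (differentiableAt_log_Gamma hx)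
  rwa [slope_def_field, add_sub_cancel_left, div_one, Function.comp_apply, Function.comp_apply,
    Gamma_add_one hx.ne', log_mul hx.ne' (Gamma_pos_of_pos hx).ne', add_sub_cancel_right] at hslope

theorem tendsto_digamma_sub_log : Tendsto (fun x => digamma x - log x) atTop (𝓝 0) := by
  have hlower : Tendsto (fun x => log (x - 1) - log x) atTop (𝓝 0) := by
    have h := ((tendsto_log_comp_add_sub_log 1).comp
      (tendsto_atTop_add_const_right atTop (-1) tendsto_id)).neg
    rw [neg_zero] at h
    refine h.congr fun x => ?_
    simp only [Function.comp_apply, id, ← sub_eq_add_neg, sub_add_cancel, neg_sub]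
  refine tendsto_of_tendsto_of_tendsto_of_le_of_le' hlower tendsto_const_nhds ?_ ?_
  · filter_upwards [eventually_gt_atTop 1] with x hx
    linarith [log_sub_one_le_digamma hx]
  · filter_upwards [eventually_gt_atTop 0] with x hx
    linarith [digamma_le_log hx]

theorem tendsto_digamma_add_sub (a : ℝ) :
    Tendsto (fun x => digamma (x + a) - digamma x) atTop (𝓝 0) := by
  have h := ((tendsto_digamma_sub_log.comp (tendsto_atTop_add_const_right atTop a tendsto_id)).add
    (tendsto_log_comp_add_sub_log a)).sub tendsto_digamma_sub_log
  simp only [add_zero, sub_zero] at h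
  refine h.congr fun x => ?_
  simp only [Function.comp_apply, id]
  ring

theorem tendsto_sum_range_inv_add_sub_inv_add {x y : ℝ} (hx : 0 < x) (hy : 0 < y) :
    Tendsto (fun n : ℕ => ∑ k ∈ range n, ((x + k)⁻¹ - (y + k)⁻¹)) atTop
      (𝓝 (digamma y - digamma x)) := by
  have h := ((tendsto_digamma_add_sub (y - x)).comp
    (tendsto_atTop_add_const_left atTop x tendsto_natCast_atTop_atTop)).const_sub
    (digamma y - digamma x)
  rw [sub_zero] at h
  refine h.congr fun n => ?_
  rw [Function.comp_apply, sum_sub_distrib, show x + n + (y - x) = y + n by ring]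
  linarith [digamma_add_nat hx n, digamma_add_nat hy n]

theorem summable_inv_add_pow {a : ℝ} (ha : 0 < a) {p : ℕ} (hp : 1 < p) :
    Summable fun k : ℕ => ((a + k) ^ p)⁻¹ :=
  ((summable_one_div_nat_add_rpow a p).2 (mod_cast hp)).congr fun k => by
    rw [abs_of_pos (by positivity), rpow_natCast, one_div, add_comm]

theorem norm_inv_add_pow_le {a y : ℝ} (ha : 0 < a) (hay : y ∈ Ioi a) (k p : ℕ) :
    ‖((y + k) ^ p)⁻¹‖ ≤ ((a + k) ^ p)⁻¹ := by
  have hy : 0 < y := ha.trans hay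
  rw [norm_of_nonneg (by positivity)]
  exact inv_anti₀ (by positivity) (pow_le_pow_left₀ (by positivity) (by linarith [mem_Ioi.1 hay]) p)

theorem hasDerivAt_const_sub_inv_add (c : ℝ) (k : ℕ) {y : ℝ} (hy : 0 < y) :
    HasDerivAt (fun z : ℝ => c - (z + k)⁻¹) ((y + k) ^ 2)⁻¹ y := by
  simpa using ((hasDerivAt_inv (by positivity : y + k ≠ 0)).comp_add_const y (k : ℝ)).const_sub c

theorem hasDerivAt_inv_add_sq (k : ℕ) {y : ℝ} (hy : 0 < y) :
    HasDerivAt (fun z : ℝ => ((z + k) ^ 2)⁻¹) (-2 * ((y + k) ^ 3)⁻¹) y := by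
  refine (((hasDerivAt_pow 2 (y + k)).comp_add_const y (k : ℝ)).fun_inv
    (by positivity)).congr_deriv ?_
  field_simp
  ring

theorem inv_add_one_sq_le_inv_sub_inv {u : ℝ} (hu : 0 < u) :
    ((u + 1) ^ 2)⁻¹ ≤ u⁻¹ - (u + 1)⁻¹ := by
  rw [inv_sub_inv hu.ne' (by positivity), add_sub_cancel_left, one_div]
  exact inv_anti₀ (by positivity) (by nlinarith)

theorem inv_sq_sub_inv_add_one_sq_le {u : ℝ} (hu : 0 < u) :
    (u ^ 2)⁻¹ - ((u + 1) ^ 2)⁻¹ ≤ (u ^ 3)⁻¹ + ((u + 1) ^ 3)⁻¹ := by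
  rw [← sub_nonneg]
  have key : (u ^ 3)⁻¹ + ((u + 1) ^ 3)⁻¹ - ((u ^ 2)⁻¹ - ((u + 1) ^ 2)⁻¹)
      = (2 * u + 1) / (u ^ 3 * (u + 1) ^ 3) := by
    field_simp
    ring
  rw [key]
  positivity

theorem summable_inv_add_sub_inv_add {x y : ℝ} (hx : 0 < x) (hy : x / 2 < y) :
    Summable fun k : ℕ => (x + k)⁻¹ - (y + k)⁻¹ :=
  summable_of_summable_hasDerivAt_of_isPreconnected (summable_inv_add_pow (half_pos hx) one_lt_two)
    isOpen_Ioi isPreconnected_Ioi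
    (fun k z hz => hasDerivAt_const_sub_inv_add _ k ((half_pos hx).trans hz))
    (fun k z hz => norm_inv_add_pow_le (half_pos hx) hz k 2)
    (mem_Ioi.2 (half_lt_self hx)) (by simp) hy

theorem digamma_eventuallyEq_add_tsum {x : ℝ} (hx : 0 < x) :
    digamma =ᶠ[𝓝 x] fun y => digamma x + ∑' k : ℕ, ((x + k)⁻¹ - (y + k)⁻¹) := by
  filter_upwards [Ioi_mem_nhds (half_lt_self hx)] with y hy
  have hsum := (summable_inv_add_sub_inv_add hx hy).hasSum.tendsto_sum_nat
  rw [tendsto_nhds_unique hsum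
    (tendsto_sum_range_inv_add_sub_inv_add hx ((half_pos hx).trans hy)), add_sub_cancel]

theorem hasDerivAt_tsum_inv_add_sub_inv_add {x : ℝ} (hx : 0 < x) :
    HasDerivAt (fun y : ℝ => ∑' k : ℕ, ((x + k)⁻¹ - (y + k)⁻¹)) (∑' k : ℕ, ((x + k) ^ 2)⁻¹) x :=
  hasDerivAt_tsum_of_isPreconnected (summable_inv_add_pow (half_pos hx) one_lt_two)
    isOpen_Ioi isPreconnected_Ioi
    (fun k z hz => hasDerivAt_const_sub_inv_add _ k ((half_pos hx).trans hz))
    (fun k z hz => norm_inv_add_pow_le (half_pos hx) hz k 2)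
    (mem_Ioi.2 (half_lt_self hx)) (by simp) (mem_Ioi.2 (half_lt_self hx))

theorem trigamma_eq_tsum {x : ℝ} (hx : 0 < x) : trigamma x = ∑' k : ℕ, ((x + k) ^ 2)⁻¹ := by
  rw [trigamma, iteratedDeriv_succ, iteratedDeriv_one]
  change deriv digamma x = _
  rw [(digamma_eventuallyEq_add_tsum hx).deriv_eq]
  exact ((hasDerivAt_tsum_inv_add_sub_inv_add hx).const_add _).deriv

theorem hasDerivAt_trigamma {x : ℝ} (hx : 0 < x) :
    HasDerivAt trigamma (-2 * ∑' k : ℕ, ((x + k) ^ 3)⁻¹) x := by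
  have h := hasDerivAt_tsum_of_isPreconnected
    ((summable_inv_add_pow (half_pos hx) (by norm_num : 1 < 3)).mul_left 2)
    isOpen_Ioi isPreconnected_Ioi
    (fun k z hz => hasDerivAt_inv_add_sq k ((half_pos hx).trans hz))
    (fun k z hz => by
      rw [norm_mul, norm_neg, norm_two]
      exact mul_le_mul_of_nonneg_left (norm_inv_add_pow_le (half_pos hx) hz k 3) zero_le_two)
    (mem_Ioi.2 (half_lt_self hx)) (summable_inv_add_pow hx one_lt_two)
    (mem_Ioi.2 (half_lt_self hx))
  rw [tsum_mul_left] at h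
  refine h.congr_of_eventuallyEq ?_
  filter_upwards [Ioi_mem_nhds hx] with y hy using trigamma_eq_tsum hy

theorem trigamma_le_inv_add_inv_sq {x : ℝ} (hx : 0 < x) : trigamma x ≤ x⁻¹ + (x ^ 2)⁻¹ := by
  have htail : ∑' k : ℕ, ((x + (k + 1 : ℕ)) ^ 2)⁻¹ ≤ x⁻¹ := by
    refine tsum_le_of_sum_range_le (fun k => by positivity) fun n => ?_
    calc ∑ k ∈ range n, ((x + (k + 1 : ℕ)) ^ 2)⁻¹
        ≤ ∑ k ∈ range n, ((x + k)⁻¹ - (x + (k + 1 : ℕ))⁻¹) := sum_le_sum fun k _ => by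
          simpa only [Nat.cast_succ, add_assoc] using
            inv_add_one_sq_le_inv_sub_inv (by positivity : 0 < x + k)
      _ = x⁻¹ - (x + n)⁻¹ := by simpa using sum_range_sub' (fun k : ℕ => (x + k)⁻¹) n
      _ ≤ x⁻¹ := sub_le_self _ (by positivity)
  rw [trigamma_eq_tsum hx, (summable_inv_add_pow hx one_lt_two).tsum_eq_zero_add]
  simp only [Nat.cast_zero, add_zero]
  linarith

theorem inv_sq_add_inv_cube_le_two_mul_tsum {x : ℝ} (hx : 0 < x) :
    (x ^ 2)⁻¹ + (x ^ 3)⁻¹ ≤ 2 * ∑' k : ℕ, ((x + k) ^ 3)⁻¹ := by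
  set g : ℕ → ℝ := fun k => ((x + k) ^ 3)⁻¹
  have hg : Summable g := summable_inv_add_pow hx (by norm_num)
  have hpartial (n : ℕ) : (x ^ 2)⁻¹ - ((x + n) ^ 2)⁻¹ ≤ 2 * ∑' k, g k - (x ^ 3)⁻¹ := by
    have htel : ∑ k ∈ range n, (((x + k) ^ 2)⁻¹ - ((x + (k + 1 : ℕ)) ^ 2)⁻¹)
        = (x ^ 2)⁻¹ - ((x + n) ^ 2)⁻¹ := by
      simpa using sum_range_sub' (fun k : ℕ => ((x + k) ^ 2)⁻¹) n
    have hle : ∑ k ∈ range n, (((x + k) ^ 2)⁻¹ - ((x + (k + 1 : ℕ)) ^ 2)⁻¹)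
        ≤ ∑ k ∈ range n, g k + ∑ k ∈ range n, g (k + 1) := by
      rw [← sum_add_distrib]
      refine sum_le_sum fun k _ => ?_
      simpa only [g, Nat.cast_succ, add_assoc] using
        inv_sq_sub_inv_add_one_sq_le (by positivity : 0 < x + k)
    have h1 := hg.sum_le_tsum (range n) fun k _ => by positivity
    have h2 := hg.sum_le_tsum (range (n + 1)) fun k _ => by positivity
    rw [sum_range_succ'] at h2
    simp only [g, Nat.cast_zero, add_zero] at h2
    linarith
  have hlim : Tendsto (fun n : ℕ => (x ^ 2)⁻¹ - ((x + n) ^ 2)⁻¹) atTop (𝓝 ((x ^ 2)⁻¹)) := by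
    simpa using (summable_inv_add_pow hx one_lt_two).tendsto_atTop_zero.const_sub (x ^ 2)⁻¹
  linarith [le_of_tendsto' hlim hpartial]

theorem antitoneOn_mul_trigamma : AntitoneOn (fun t => t * trigamma t) (Ioi 0) := by
  have hderiv (t : ℝ) (ht : 0 < t) : HasDerivAt (fun t => t * trigamma t)
      (trigamma t - 2 * (t * ∑' k : ℕ, ((t + k) ^ 3)⁻¹)) t :=
    ((hasDerivAt_id' t).fun_mul (hasDerivAt_trigamma ht)).congr_deriv (by ring)
  refine antitoneOn_of_deriv_nonpos (convex_Ioi 0)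
    (fun t ht => (hderiv t ht).continuousAt.continuousWithinAt) (fun t ht => ?_) fun t ht => ?_
  · rw [interior_Ioi] at ht
    exact (hderiv t ht).differentiableAt.differentiableWithinAt
  · rw [interior_Ioi] at ht
    have hsplit : t⁻¹ + (t ^ 2)⁻¹ = t * ((t ^ 2)⁻¹ + (t ^ 3)⁻¹) := by
      field_simp
    rw [(hderiv t ht).deriv, sub_nonpos]
    calc trigamma t ≤ t * ((t ^ 2)⁻¹ + (t ^ 3)⁻¹) := hsplit ▸ trigamma_le_inv_add_inv_sq ht
      _ ≤ t * (2 * ∑' k : ℕ, ((t + k) ^ 3)⁻¹) :=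
        mul_le_mul_of_nonneg_left (inv_sq_add_inv_cube_le_two_mul_tsum ht) (le_of_lt ht)
      _ = _ := by ring

theorem sum_mul_apply_sum_le_of_antitoneOn {ι : Type*} (s : Finset ι) {φ : ℝ → ℝ}
    (hφ : AntitoneOn φ (Ioi 0)) {a : ι → ℝ} (ha : ∀ i ∈ s, 0 < a i) :
    (∑ i ∈ s, a i) * φ (∑ i ∈ s, a i) ≤ ∑ i ∈ s, a i * φ (a i) := by
  rw [sum_mul]
  refine sum_le_sum fun i hi => mul_le_mul_of_nonneg_left ?_ (ha i hi).le
  have hle : a i ≤ ∑ j ∈ s, a j := single_le_sum (fun j hj => (ha j hj).le) hi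
  exact hφ (ha i hi) ((ha i hi).trans_le hle) hle

theorem logconcavity_bound_general {S : Type*} [Fintype S]
    (α : ℝ) (hα : 0 < α) (x : S → ℝ) (hx : ∀ i, 0 < x i)
    (X Y : ℝ) (hX : X = ∑ i, x i) (hY : Y = 1 - X) (hYpos : 0 < Y) :
    trigamma α - (∑ i, (x i) ^ 2 * trigamma (α * x i)) - Y ^ 2 * trigamma (α * Y) ≤ 0 := by
  set a : Option S → ℝ := fun o => α * o.elim Y x
  have ha : ∀ o, 0 < a o := by
    rintro (_ | i)
    exacts [mul_pos hα hYpos, mul_pos hα (hx i)]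
  have hsum : ∑ o, a o = α := by
    rw [Fintype.sum_option]
    simp only [a, Option.elim, ← mul_sum, ← hX, hY]
    ring
  have key := sum_mul_apply_sum_le_of_antitoneOn univ antitoneOn_mul_trigamma fun o _ => ha o
  rw [hsum, Fintype.sum_option] at key
  have hscaled : ∑ i, a (some i) * (a (some i) * trigamma (a (some i)))
      = α ^ 2 * ∑ i, x i ^ 2 * trigamma (α * x i) := by
    rw [mul_sum]
    exact sum_congr rfl fun i _ => by simp only [a, Option.elim]; ring
  rw [hscaled] at key
  simp only [a, Option.elim] at key
  refine le_of_mul_le_mul_left ?_ (pow_pos hα 2)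
  linarith

/-- Log-concavity bound: for `α > 0`, a finite set `S`, positive weights `x : S → ℝ` with
`X = ∑ x i ≤ 1` and `Y = 1 - X > 0`,
`ψ'(α) - ∑_i x i ^ 2 ψ'(α x i) - Y² ψ'(α Y) ≤ 0`. -/
theorem logconcavity_bound {S : Type*} [Fintype S]
    (α : ℝ) (hα : 0 < α) (x : S → ℝ) (hx : ∀ i, 0 < x i)
    (X Y : ℝ) (hX : X = ∑ i, x i) (hX1 : X ≤ 1) (hY : Y = 1 - X) (hYpos : 0 < Y) :
    trigamma α - (∑ i, (x i) ^ 2 * trigamma (α * x i)) - Y ^ 2 * trigamma (α * Y) ≤ 0 :=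
  logconcavity_bound_general α hα x hx X Y hX hY hYpos
end
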